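/- arXiv:quant-ph/0101119 — 3 statements merged into one kernel-verified Lean document; each statement's English description precedes it below -/
import Mathlib

section
/- Lower bound for the quantum CDO rate distortion problem: for any block code of rate R and block length L in the hidden-source model with convex distortion d, if E[d(P^e_{X^L Y^L})] ≤ Δ then R ≥ min over channels P_{Y|V} with d(P_{XY}) ≤ Δ of I(V;Y). -/
open scoped BigOperators
set_option linter.unusedSectionVars false
set_option linter.unusedVariables false
set_option maxHeartbeats 1000000

/-- `p` is a probability mass function on the finite set `α`. -/
def IsDist {α : Type*} [Fintype α] (p : α → ℝ) : Prop :=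
  (∀ a, 0 ≤ p a) ∧ ∑ a, p a = 1

/-- `W` is a channel (stochastic matrix) from `α` to `β`. -/
def IsChannel {α β : Type*} [Fintype β] (W : α → β → ℝ) : Prop :=
  ∀ a, (∀ b, 0 ≤ W a b) ∧ ∑ b, W a b = 1

/-- Marginal on the first coordinate. -/
noncomputable def margX {α β : Type*} [Fintype α] [Fintype β] (p : α × β → ℝ) : α → ℝ :=
  fun a => ∑ b, p (a, b)

/-- Marginal on the second coordinate. -/
noncomputable def margY {α β : Type*} [Fintype α] [Fintype β] (p : α × β → ℝ) : β → ℝ :=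
  fun b => ∑ a, p (a, b)

/-- Mutual information `I(X;Y) = D(P_XY ‖ P_X P_Y)` (finite sum over the support). -/
noncomputable def mi {α β : Type*} [Fintype α] [Fintype β] (p : α × β → ℝ) : ℝ :=
  ∑ z : α × β, (if p z = 0 then 0 else p z * Real.log (p z / (margX p z.1 * margY p z.2)))

/-- Empirical joint distribution of a pair of strings. -/
noncomputable def empirical {𝒳 𝒴 : Type*} [DecidableEq 𝒳] [DecidableEq 𝒴] {L : ℕ}
    (x : Fin L → 𝒳) (y : Fin L → 𝒴) : 𝒳 × 𝒴 → ℝ :=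
  fun w => ((Finset.univ.filter (fun ℓ : Fin L => x ℓ = w.1 ∧ y ℓ = w.2)).card : ℝ) / L

private lemma log_sum_ineq' {ι : Type*} (s : Finset ι) (a b : ι → ℝ)
    (ha : ∀ i ∈ s, 0 ≤ a i) (hb : ∀ i ∈ s, 0 ≤ b i)
    (hab : ∀ i ∈ s, a i ≠ 0 → b i ≠ 0) :
    (∑ i ∈ s, a i) * Real.log ((∑ i ∈ s, a i) / (∑ i ∈ s, b i)) ≤
      ∑ i ∈ s, a i * Real.log (a i / b i) := by
  rcases eq_or_lt_of_le (Finset.sum_nonneg ha) with h0 | hApos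
  · have hall : ∀ i ∈ s, a i = 0 := fun i hi =>
      (Finset.sum_eq_zero_iff_of_nonneg ha).mp h0.symm i hi
    have h1 : ∑ i ∈ s, a i * Real.log (a i / b i) = 0 := by
      apply Finset.sum_eq_zero; intro i hi; rw [hall i hi]; ring
    rw [h1, ← h0]; simp
  · set A := ∑ i ∈ s, a i with hA
    set B := ∑ i ∈ s, b i with hB
    have hApos : 0 < A := hApos
    obtain ⟨i0, hi0, hai0⟩ : ∃ i ∈ s, a i ≠ 0 := by
      by_contra h
      push_neg at h
      have : A = 0 := Finset.sum_eq_zero h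
      linarith
    have hbi0 : 0 < b i0 := lt_of_le_of_ne (hb i0 hi0) (Ne.symm (hab i0 hi0 hai0))
    have hBpos : 0 < B := lt_of_lt_of_le hbi0 (Finset.single_le_sum hb hi0)
    have key : ∀ i ∈ s, a i - A / B * b i ≤ a i * Real.log (a i / b i) - a i * Real.log (A / B) := by
      intro i hi
      rcases eq_or_lt_of_le (ha i hi) with h0 | hpos
      · rw [← h0]
        have h2 : (0:ℝ) ≤ A / B * b i :=
          mul_nonneg (div_nonneg hApos.le hBpos.le) (hb i hi)
        simp only [zero_mul, zero_sub, sub_zero]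
        linarith
      · have hbpos : 0 < b i := lt_of_le_of_ne (hb i hi) (Ne.symm (hab i hi (ne_of_gt hpos)))
        have ht : 0 < A * b i / (B * a i) := by positivity
        have hlog := Real.log_le_sub_one_of_pos ht
        have hl : Real.log (a i / b i) - Real.log (A / B) = -Real.log (A * b i / (B * a i)) := by
          rw [Real.log_div (ne_of_gt hpos) (ne_of_gt hbpos),
            Real.log_div (ne_of_gt hApos) (ne_of_gt hBpos),
            Real.log_div (by positivity) (by positivity),
            Real.log_mul (ne_of_gt hApos) (ne_of_gt hbpos),
            Real.log_mul (ne_of_gt hBpos) (ne_of_gt hpos)]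
          ring
        have h3 : a i * Real.log (a i / b i) - a i * Real.log (A / B)
            = a i * (-Real.log (A * b i / (B * a i))) := by rw [← mul_sub, hl]
        rw [h3]
        have h2 : a i * (A * b i / (B * a i)) = A / B * b i := by
          field_simp
        nlinarith
    have hsum := Finset.sum_le_sum key
    have e1 : ∑ i ∈ s, (a i * Real.log (a i / b i) - a i * Real.log (A / B))
        = (∑ i ∈ s, a i * Real.log (a i / b i)) - A * Real.log (A / B) := by
      rw [Finset.sum_sub_distrib, ← Finset.sum_mul, ← hA]
    have e2 : ∑ i ∈ s, (a i - A / B * b i) = 0 := by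
      rw [Finset.sum_sub_distrib, ← Finset.mul_sum, ← hA, ← hB]
      field_simp
      ring
    rw [e1, e2] at hsum
    linarith

private lemma mi_nonneg {α β : Type*} [Fintype α] [Fintype β] (p : α × β → ℝ)
    (hp : ∀ z, 0 ≤ p z) (hsum : ∑ z, p z = 1) : 0 ≤ mi p := by
  have hmX : ∀ a, 0 ≤ margX p a := fun a => Finset.sum_nonneg fun b _ => hp _
  have hmY : ∀ b, 0 ≤ margY p b := fun b => Finset.sum_nonneg fun a _ => hp _
  have key : ∀ z : α × β, p z - margX p z.1 * margY p z.2 ≤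
      (if p z = 0 then 0 else p z * Real.log (p z / (margX p z.1 * margY p z.2))) := by
    intro z
    rcases eq_or_lt_of_le (hp z) with h0 | hpos
    · rw [if_pos h0.symm, ← h0]
      have := mul_nonneg (hmX z.1) (hmY z.2)
      linarith
    · rw [if_neg (ne_of_gt hpos)]
      have hX : p z ≤ margX p z.1 := by
        have : p (z.1, z.2) ≤ ∑ b, p (z.1, b) :=
          Finset.single_le_sum (fun b _ => hp _) (Finset.mem_univ z.2)
        simpa [margX] using this
      have hY : p z ≤ margY p z.2 := by
        have : p (z.1, z.2) ≤ ∑ a, p (a, z.2) :=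
          Finset.single_le_sum (f := fun a => p (a, z.2)) (fun a _ => hp _) (Finset.mem_univ z.1)
        simpa [margY] using this
      have hXpos : 0 < margX p z.1 := lt_of_lt_of_le hpos hX
      have hYpos : 0 < margY p z.2 := lt_of_lt_of_le hpos hY
      have ht : 0 < margX p z.1 * margY p z.2 / p z := by positivity
      have hlog := Real.log_le_sub_one_of_pos ht
      have hl : Real.log (p z / (margX p z.1 * margY p z.2))
          = -Real.log (margX p z.1 * margY p z.2 / p z) := by
        rw [Real.log_div (ne_of_gt hpos) (by positivity),
          Real.log_div (by positivity) (ne_of_gt hpos)]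
        ring
      rw [hl]
      have h2 : p z * (margX p z.1 * margY p z.2 / p z) = margX p z.1 * margY p z.2 := by
        field_simp
      nlinarith
  have hsum2 : ∑ z : α × β, (p z - margX p z.1 * margY p z.2) = 0 := by
    rw [Finset.sum_sub_distrib, hsum]
    have hXY : ∑ z : α × β, margX p z.1 * margY p z.2
        = (∑ a, margX p a) * (∑ b, margY p b) := by
      rw [Fintype.sum_prod_type, Finset.sum_mul_sum]
    have hX1 : ∑ a, margX p a = 1 := by
      rw [← hsum, Fintype.sum_prod_type]; rfl
    have hY1 : ∑ b, margY p b = 1 := by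
      rw [← hsum, Fintype.sum_prod_type, Finset.sum_comm]; rfl
    rw [hXY, hX1, hY1]; ring
  have := Finset.sum_le_sum (s := (Finset.univ : Finset (α × β))) (fun z _ => key z)
  rw [hsum2] at this
  simpa [mi] using this

section CDO
variable {𝒳 𝒱 𝒴 : Type*} [Fintype 𝒳] [Fintype 𝒱] [Fintype 𝒴]
  [DecidableEq 𝒳] [DecidableEq 𝒱] [DecidableEq 𝒴] {L : ℕ}

private noncomputable def Pprod (pXV : 𝒳 × 𝒱 → ℝ) (v : Fin L → 𝒱) : ℝ :=
  ∏ ℓ, margY pXV (v ℓ)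

private noncomputable def Jl (pXV : 𝒳 × 𝒱 → ℝ) (f : (Fin L → 𝒱) → Fin L → 𝒴)
    (ℓ : Fin L) (z : 𝒱 × 𝒴) : ℝ :=
  ∑ vL : Fin L → 𝒱, if (vL ℓ, f vL ℓ) = z then Pprod pXV vL else 0

private noncomputable def muJ (pXV : 𝒳 × 𝒱 → ℝ) (f : (Fin L → 𝒱) → Fin L → 𝒴)
    (z : 𝒱 × 𝒴) : ℝ :=
  (∑ ℓ, Jl pXV f ℓ z) / L

private noncomputable def Wch (pXV : 𝒳 × 𝒱 → ℝ) (f : (Fin L → 𝒱) → Fin L → 𝒴)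
    (y0 : 𝒴) (v : 𝒱) (y : 𝒴) : ℝ :=
  if margY pXV v = 0 then (if y = y0 then 1 else 0) else muJ pXV f (v, y) / margY pXV v

private noncomputable def pYl (pXV : 𝒳 × 𝒱 → ℝ) (f : (Fin L → 𝒱) → Fin L → 𝒴)
    (ℓ : Fin L) (y : 𝒴) : ℝ :=
  ∑ v, Jl pXV f ℓ (v, y)

private noncomputable def PYf (pXV : 𝒳 × 𝒱 → ℝ) (f : (Fin L → 𝒱) → Fin L → 𝒴)
    (y : Fin L → 𝒴) : ℝ :=
  ∑ vL, if f vL = y then Pprod pXV vL else 0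

variable {pXV : 𝒳 × 𝒱 → ℝ} {f : (Fin L → 𝒱) → Fin L → 𝒴}

private lemma pV_nonneg (hpXV : (∀ z, 0 ≤ pXV z) ∧ ∑ z, pXV z = 1) (v : 𝒱) :
    0 ≤ margY pXV v :=
  Finset.sum_nonneg fun a _ => hpXV.1 _

private lemma pV_sum (hpXV : (∀ z, 0 ≤ pXV z) ∧ ∑ z, pXV z = 1) :
    ∑ v, margY pXV v = 1 := by
  rw [← hpXV.2, Fintype.sum_prod_type, Finset.sum_comm]; rfl

private lemma pXV_eq_zero (hpXV : (∀ z, 0 ≤ pXV z) ∧ ∑ z, pXV z = 1) {v : 𝒱}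
    (h : margY pXV v = 0) (a : 𝒳) : pXV (a, v) = 0 :=
  (Finset.sum_eq_zero_iff_of_nonneg (fun a _ => hpXV.1 _)).mp h a (Finset.mem_univ a)

private lemma P_nonneg (hpXV : (∀ z, 0 ≤ pXV z) ∧ ∑ z, pXV z = 1) (vL : Fin L → 𝒱) :
    0 ≤ Pprod pXV vL :=
  Finset.prod_nonneg fun ℓ _ => pV_nonneg hpXV _

private lemma sum_pi_prod' (F : Fin L → 𝒱 → ℝ) :
    ∑ g : Fin L → 𝒱, ∏ j, F j (g j) = ∏ j, ∑ c, F j c := by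
  rw [Finset.prod_univ_sum, Fintype.piFinset_univ]

private lemma P_sum (hpXV : (∀ z, 0 ≤ pXV z) ∧ ∑ z, pXV z = 1) :
    ∑ vL : Fin L → 𝒱, Pprod pXV vL = 1 := by
  unfold Pprod
  rw [sum_pi_prod' (fun _ c => margY pXV c)]
  simp [pV_sum hpXV]

private lemma marg_ite (hpXV : (∀ z, 0 ≤ pXV z) ∧ ∑ z, pXV z = 1) (ℓ : Fin L) (v : 𝒱) :
    ∑ vL : Fin L → 𝒱, (if vL ℓ = v then Pprod pXV vL else 0) = margY pXV v := by
  have step : ∀ vL : Fin L → 𝒱, (if vL ℓ = v then Pprod pXV vL else 0)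
      = ∏ j, (if j = ℓ then (if vL j = v then margY pXV (vL j) else 0) else margY pXV (vL j)) := by
    intro vL
    by_cases h : vL ℓ = v
    · rw [if_pos h]
      unfold Pprod
      apply Finset.prod_congr rfl
      intro j _
      by_cases hj : j = ℓ
      · subst hj; rw [if_pos rfl, if_pos h]
      · rw [if_neg hj]
    · rw [if_neg h]
      symm
      apply Finset.prod_eq_zero (Finset.mem_univ ℓ)
      rw [if_pos rfl, if_neg h]
  simp_rw [step]
  rw [sum_pi_prod' (fun j c => if j = ℓ then (if c = v then margY pXV c else 0) else margY pXV c)]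
  have : ∀ j : Fin L, (∑ c, if j = ℓ then (if c = v then margY pXV c else 0) else margY pXV c)
      = if j = ℓ then margY pXV v else 1 := by
    intro j
    by_cases hj : j = ℓ
    · simp only [if_pos hj]
      rw [Finset.sum_ite_eq' Finset.univ v (fun c => margY pXV c), if_pos (Finset.mem_univ v)]
    · simp only [if_neg hj]
      exact pV_sum hpXV
  simp_rw [this]
  rw [Finset.prod_ite_eq' Finset.univ ℓ (fun _ => margY pXV v)]
  simp

private lemma Jl_nonneg (hpXV : (∀ z, 0 ≤ pXV z) ∧ ∑ z, pXV z = 1) (ℓ : Fin L) (z : 𝒱 × 𝒴) :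
    0 ≤ Jl pXV f ℓ z :=
  Finset.sum_nonneg fun vL _ => by
    split
    · exact P_nonneg hpXV _
    · exact le_refl 0

private lemma Jl_margY (hpXV : (∀ z, 0 ≤ pXV z) ∧ ∑ z, pXV z = 1) (ℓ : Fin L) (v : 𝒱) :
    ∑ y, Jl pXV f ℓ (v, y) = margY pXV v := by
  unfold Jl
  rw [Finset.sum_comm]
  rw [← marg_ite hpXV ℓ v]
  apply Finset.sum_congr rfl
  intro vL _
  simp [Prod.mk.injEq, ite_and, Finset.sum_ite_eq]

private lemma muJ_nonneg (hpXV : (∀ z, 0 ≤ pXV z) ∧ ∑ z, pXV z = 1) (z : 𝒱 × 𝒴) :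
    0 ≤ muJ pXV f z :=
  div_nonneg (Finset.sum_nonneg fun ℓ _ => Jl_nonneg hpXV ℓ z) (Nat.cast_nonneg L)

private lemma muJ_le_pV (hpXV : (∀ z, 0 ≤ pXV z) ∧ ∑ z, pXV z = 1) (hL : 0 < L) (z : 𝒱 × 𝒴) :
    muJ pXV f z ≤ margY pXV z.1 := by
  unfold muJ
  rw [div_le_iff₀ (by exact_mod_cast hL)]
  calc ∑ ℓ, Jl pXV f ℓ z ≤ ∑ ℓ : Fin L, margY pXV z.1 := by
        apply Finset.sum_le_sum
        intro ℓ _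
        rw [← Jl_margY (f := f) hpXV ℓ z.1]
        exact Finset.single_le_sum (f := fun y => Jl pXV f ℓ (z.1, y))
          (fun y _ => Jl_nonneg hpXV ℓ _) (Finset.mem_univ z.2)
    _ = margY pXV z.1 * L := by simp [mul_comm]

private lemma muJ_eq (hpXV : (∀ z, 0 ≤ pXV z) ∧ ∑ z, pXV z = 1) (hL : 0 < L) (y0 : 𝒴)
    (z : 𝒱 × 𝒴) : margY pXV z.1 * Wch pXV f y0 z.1 z.2 = muJ pXV f z := by
  unfold Wch
  by_cases h : margY pXV z.1 = 0
  · rw [if_pos h, h, zero_mul]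
    have h1 : muJ pXV f z ≤ 0 := by
      have := muJ_le_pV (f := f) hpXV hL z
      rw [h] at this; exact this
    exact (le_antisymm h1 (muJ_nonneg hpXV z)).symm
  · rw [if_neg h]
    rw [show (z.1, z.2) = z from rfl]
    field_simp

private lemma Wch_channel (hpXV : (∀ z, 0 ≤ pXV z) ∧ ∑ z, pXV z = 1) (hL : 0 < L) (y0 : 𝒴)
    (v : 𝒱) : (∀ y, 0 ≤ Wch pXV f y0 v y) ∧ ∑ y, Wch pXV f y0 v y = 1 := by
  by_cases h : margY pXV v = 0
  · constructor
    · intro y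
      unfold Wch; rw [if_pos h]; split <;> norm_num
    · unfold Wch
      simp only [if_pos h]
      rw [Finset.sum_ite_eq' Finset.univ y0 (fun _ => (1:ℝ))]
      simp
  · constructor
    · intro y
      unfold Wch; rw [if_neg h]
      exact div_nonneg (muJ_nonneg hpXV _) (lt_of_le_of_ne (pV_nonneg hpXV v) (Ne.symm h)).le
    · unfold Wch
      simp only [if_neg h]
      rw [← Finset.sum_div]
      have hL0 : (L:ℝ) ≠ 0 := Nat.cast_ne_zero.mpr hL.ne'
      have h2 : ∑ y, muJ pXV f (v, y) = margY pXV v := by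
        unfold muJ
        rw [← Finset.sum_div, Finset.sum_comm,
          Finset.sum_congr rfl (fun ℓ _ => Jl_margY hpXV ℓ v), Finset.sum_const,
          Finset.card_univ, Fintype.card_fin, nsmul_eq_mul, mul_div_assoc]
        field_simp
      rw [h2, div_self h]

private lemma group_sum (ℓ : Fin L) (g : 𝒱 × 𝒴 → ℝ) :
    ∑ vL, Pprod pXV vL * g (vL ℓ, f vL ℓ) = ∑ z : 𝒱 × 𝒴, Jl pXV f ℓ z * g z := by
  unfold Jl
  simp_rw [Finset.sum_mul, ite_mul, zero_mul]
  rw [Finset.sum_comm]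
  apply Finset.sum_congr rfl
  intro vL _
  rw [Finset.sum_ite_eq Finset.univ (vL ℓ, f vL ℓ) (fun z => Pprod pXV vL * g z)]
  simp

private lemma muJ_margX (hpXV : (∀ z, 0 ≤ pXV z) ∧ ∑ z, pXV z = 1) (hL : 0 < L) (v : 𝒱) :
    margX (muJ pXV f) v = margY pXV v := by
  have hL0 : (L:ℝ) ≠ 0 := Nat.cast_ne_zero.mpr hL.ne'
  show ∑ y, muJ pXV f (v, y) = margY pXV v
  unfold muJ
  rw [← Finset.sum_div, Finset.sum_comm,
    Finset.sum_congr rfl (fun ℓ _ => Jl_margY hpXV ℓ v), Finset.sum_const,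
    Finset.card_univ, Fintype.card_fin, nsmul_eq_mul, mul_div_assoc]
  field_simp

private lemma muJ_margY (y : 𝒴) :
    margY (muJ pXV f) y = (∑ ℓ, pYl pXV f ℓ y) / L := by
  show ∑ v, muJ pXV f (v, y) = _
  unfold muJ pYl
  rw [← Finset.sum_div, Finset.sum_comm]

private lemma S1 (hpXV : (∀ z, 0 ≤ pXV z) ∧ ∑ z, pXV z = 1) (hL : 0 < L) :
    (L : ℝ) * mi (muJ pXV f) ≤
      ∑ ℓ, ∑ z : 𝒱 × 𝒴, Jl pXV f ℓ z *
        Real.log (Jl pXV f ℓ z / (margY pXV z.1 * pYl pXV f ℓ z.2)) := by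
  have hL0 : (L:ℝ) ≠ 0 := Nat.cast_ne_zero.mpr hL.ne'
  rw [Finset.sum_comm, mi, Finset.mul_sum]
  apply Finset.sum_le_sum
  intro z _
  have hsumJ : ∑ ℓ, Jl pXV f ℓ z = L * muJ pXV f z := by
    unfold muJ; field_simp
  by_cases hz : muJ pXV f z = 0
  · rw [if_pos hz, mul_zero]
    have hJ0 : ∀ ℓ : Fin L, Jl pXV f ℓ z = 0 := by
      have : ∑ ℓ, Jl pXV f ℓ z = 0 := by rw [hsumJ, hz, mul_zero]
      exact fun ℓ => (Finset.sum_eq_zero_iff_of_nonneg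
        (fun ℓ _ => Jl_nonneg hpXV ℓ z)).mp this ℓ (Finset.mem_univ ℓ)
    apply le_of_eq
    symm
    apply Finset.sum_eq_zero
    intro ℓ _
    rw [hJ0 ℓ, zero_mul]
  · rw [if_neg hz]
    have key := log_sum_ineq' Finset.univ (fun ℓ => Jl pXV f ℓ z)
      (fun ℓ => margY pXV z.1 * pYl pXV f ℓ z.2)
      (fun ℓ _ => Jl_nonneg hpXV ℓ z)
      (fun ℓ _ => mul_nonneg (pV_nonneg hpXV _)
        (Finset.sum_nonneg fun v _ => Jl_nonneg hpXV ℓ _))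
      (by
        intro ℓ _ hJ
        have hJpos : 0 < Jl pXV f ℓ z := lt_of_le_of_ne (Jl_nonneg hpXV ℓ z) (Ne.symm hJ)
        have h1 : Jl pXV f ℓ z ≤ margY pXV z.1 := by
          rw [← Jl_margY (f := f) hpXV ℓ z.1]
          exact Finset.single_le_sum (f := fun y => Jl pXV f ℓ (z.1, y))
            (fun y _ => Jl_nonneg hpXV ℓ _) (Finset.mem_univ z.2)
        have h2 : Jl pXV f ℓ z ≤ pYl pXV f ℓ z.2 := by
          unfold pYl
          exact Finset.single_le_sum (f := fun v => Jl pXV f ℓ (v, z.2))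
            (fun v _ => Jl_nonneg hpXV ℓ _) (Finset.mem_univ z.1)
        exact ne_of_gt (mul_pos (hJpos.trans_le h1) (hJpos.trans_le h2)))
    have hsumb : ∑ ℓ, margY pXV z.1 * pYl pXV f ℓ z.2
        = L * (margY pXV z.1 * margY (muJ pXV f) z.2) := by
      rw [← Finset.mul_sum, muJ_margY (f := f) z.2]
      field_simp
    rw [hsumJ, hsumb, mul_div_mul_left _ _ hL0] at key
    rw [muJ_margX (f := f) hpXV hL z.1, ← mul_assoc]
    exact key

private lemma PYf_sum (hpXV : (∀ z, 0 ≤ pXV z) ∧ ∑ z, pXV z = 1) :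
    ∑ yL : Fin L → 𝒴, PYf pXV f yL = 1 := by
  unfold PYf
  rw [Finset.sum_comm]
  have h1 : ∀ vL : Fin L → 𝒱, ∑ yL : Fin L → 𝒴,
      (if f vL = yL then Pprod pXV vL else 0) = Pprod pXV vL := by
    intro vL
    rw [Finset.sum_ite_eq Finset.univ (f vL) (fun _ => Pprod pXV vL)]
    simp
  rw [Finset.sum_congr rfl (fun vL _ => h1 vL)]
  exact P_sum hpXV

private lemma PYf_nonneg (hpXV : (∀ z, 0 ≤ pXV z) ∧ ∑ z, pXV z = 1) (yL : Fin L → 𝒴) :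
    0 ≤ PYf pXV f yL :=
  Finset.sum_nonneg fun vL _ => by
    split
    · exact P_nonneg hpXV _
    · exact le_refl 0

private lemma pYl_nonneg (hpXV : (∀ z, 0 ≤ pXV z) ∧ ∑ z, pXV z = 1) (ℓ : Fin L) (y : 𝒴) :
    0 ≤ pYl pXV f ℓ y :=
  Finset.sum_nonneg fun v _ => Jl_nonneg hpXV ℓ _

private lemma S2 (hpXV : (∀ z, 0 ≤ pXV z) ∧ ∑ z, pXV z = 1) (hL : 0 < L) :
    ∑ ℓ, ∑ z : 𝒱 × 𝒴, Jl pXV f ℓ z *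
        Real.log (Jl pXV f ℓ z / (margY pXV z.1 * pYl pXV f ℓ z.2))
      ≤ - ∑ vL, Pprod pXV vL * Real.log (PYf pXV f (f vL)) := by
  rw [Finset.sum_congr rfl (fun ℓ _ => (group_sum (pXV := pXV) ℓ
    (fun z => Real.log (Jl pXV f ℓ z / (margY pXV z.1 * pYl pXV f ℓ z.2)))).symm),
    Finset.sum_comm]
  set t : (Fin L → 𝒱) → ℝ := fun vL => PYf pXV f (f vL) *
    ∏ ℓ, Jl pXV f ℓ (vL ℓ, f vL ℓ) / (margY pXV (vL ℓ) * pYl pXV f ℓ (f vL ℓ)) with ht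
  set u : (Fin L → 𝒱) → ℝ := fun vL => PYf pXV f (f vL) *
    ∏ ℓ, Jl pXV f ℓ (vL ℓ, f vL ℓ) / pYl pXV f ℓ (f vL ℓ) with hu
  have step1 : ∀ vL : Fin L → 𝒱,
      (∑ ℓ, Pprod pXV vL * Real.log (Jl pXV f ℓ (vL ℓ, f vL ℓ) /
          (margY pXV (vL ℓ) * pYl pXV f ℓ (f vL ℓ))))
        + Pprod pXV vL * Real.log (PYf pXV f (f vL))
      ≤ Pprod pXV vL * t vL - Pprod pXV vL := by
    intro vL
    rcases eq_or_lt_of_le (P_nonneg hpXV vL) with hP0 | hPpos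
    · rw [← hP0]
      simp
    · have hpV : ∀ ℓ : Fin L, 0 < margY pXV (vL ℓ) := by
        intro ℓ
        rcases eq_or_lt_of_le (pV_nonneg hpXV (vL ℓ)) with h | h
        · exfalso
          have : Pprod pXV vL = 0 :=
            Finset.prod_eq_zero (Finset.mem_univ ℓ) h.symm
          rw [this] at hPpos; exact lt_irrefl 0 hPpos
        · exact h
      have hJl : ∀ ℓ : Fin L, Pprod pXV vL ≤ Jl pXV f ℓ (vL ℓ, f vL ℓ) := by
        intro ℓ
        have := Finset.single_le_sum
          (f := fun vL' => if (vL' ℓ, f vL' ℓ) = (vL ℓ, f vL ℓ) then Pprod pXV vL' else 0)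
          (fun vL' _ => by split; exacts [P_nonneg hpXV _, le_refl 0])
          (Finset.mem_univ vL)
        rw [if_pos rfl] at this
        exact this
      have hJlpos : ∀ ℓ : Fin L, 0 < Jl pXV f ℓ (vL ℓ, f vL ℓ) :=
        fun ℓ => lt_of_lt_of_le hPpos (hJl ℓ)
      have hpYlpos : ∀ ℓ : Fin L, 0 < pYl pXV f ℓ (f vL ℓ) := by
        intro ℓ
        refine lt_of_lt_of_le (hJlpos ℓ) ?_
        exact Finset.single_le_sum (f := fun v => Jl pXV f ℓ (v, f vL ℓ))
          (fun v _ => Jl_nonneg hpXV ℓ _) (Finset.mem_univ (vL ℓ))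
      have hPYpos : 0 < PYf pXV f (f vL) := by
        refine lt_of_lt_of_le hPpos ?_
        have := Finset.single_le_sum
          (f := fun vL' => if f vL' = f vL then Pprod pXV vL' else 0)
          (fun vL' _ => by split; exacts [P_nonneg hpXV _, le_refl 0])
          (Finset.mem_univ vL)
        rw [if_pos rfl] at this
        exact this
      have hrpos : ∀ ℓ : Fin L, 0 < Jl pXV f ℓ (vL ℓ, f vL ℓ) /
          (margY pXV (vL ℓ) * pYl pXV f ℓ (f vL ℓ)) :=
        fun ℓ => div_pos (hJlpos ℓ) (mul_pos (hpV ℓ) (hpYlpos ℓ))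
      have htpos : 0 < t vL := by
        rw [ht]
        exact mul_pos hPYpos (Finset.prod_pos fun ℓ _ => hrpos ℓ)
      have hlogt : Real.log (PYf pXV f (f vL))
          + ∑ ℓ, Real.log (Jl pXV f ℓ (vL ℓ, f vL ℓ) /
              (margY pXV (vL ℓ) * pYl pXV f ℓ (f vL ℓ))) = Real.log (t vL) := by
        rw [ht]
        rw [Real.log_mul (ne_of_gt hPYpos)
          (ne_of_gt (Finset.prod_pos fun ℓ _ => hrpos ℓ)),
          Real.log_prod (fun ℓ _ => ne_of_gt (hrpos ℓ))]
      have hlog := Real.log_le_sub_one_of_pos htpos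
      calc (∑ ℓ, Pprod pXV vL * Real.log (Jl pXV f ℓ (vL ℓ, f vL ℓ) /
              (margY pXV (vL ℓ) * pYl pXV f ℓ (f vL ℓ))))
            + Pprod pXV vL * Real.log (PYf pXV f (f vL))
          = Pprod pXV vL * Real.log (t vL) := by
            rw [← hlogt, ← Finset.mul_sum]; ring
        _ ≤ Pprod pXV vL * (t vL - 1) :=
            mul_le_mul_of_nonneg_left hlog hPpos.le
        _ = Pprod pXV vL * t vL - Pprod pXV vL := by ring
  have hPt_le_u : ∀ vL : Fin L → 𝒱, Pprod pXV vL * t vL ≤ u vL := by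
    intro vL
    rw [ht, hu]
    have h1 : Pprod pXV vL * (PYf pXV f (f vL) *
        ∏ ℓ, Jl pXV f ℓ (vL ℓ, f vL ℓ) / (margY pXV (vL ℓ) * pYl pXV f ℓ (f vL ℓ)))
        = PYf pXV f (f vL) * ∏ ℓ, (margY pXV (vL ℓ) *
          (Jl pXV f ℓ (vL ℓ, f vL ℓ) / (margY pXV (vL ℓ) * pYl pXV f ℓ (f vL ℓ)))) := by
      rw [Finset.prod_mul_distrib]
      unfold Pprod
      ring
    rw [h1]
    apply mul_le_mul_of_nonneg_left _ (PYf_nonneg hpXV _)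
    apply Finset.prod_le_prod
    · intro ℓ _
      exact mul_nonneg (pV_nonneg hpXV _)
        (div_nonneg (Jl_nonneg hpXV _ _)
          (mul_nonneg (pV_nonneg hpXV _) (pYl_nonneg hpXV _ _)))
    · intro ℓ _
      by_cases h : margY pXV (vL ℓ) = 0
      · rw [h, zero_mul]
        exact div_nonneg (Jl_nonneg hpXV _ _) (pYl_nonneg hpXV _ _)
      · rw [mul_div_assoc', mul_div_mul_left _ _ h]
  have hu_le : ∀ vL : Fin L → 𝒱, u vL ≤ ∑ yL : Fin L → 𝒴,
      PYf pXV f yL * ∏ ℓ, Jl pXV f ℓ (vL ℓ, yL ℓ) / pYl pXV f ℓ (yL ℓ) := by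
    intro vL
    rw [hu]
    exact Finset.single_le_sum
      (f := fun yL => PYf pXV f yL * ∏ ℓ, Jl pXV f ℓ (vL ℓ, yL ℓ) / pYl pXV f ℓ (yL ℓ))
      (fun yL _ => mul_nonneg (PYf_nonneg hpXV _)
        (Finset.prod_nonneg fun ℓ _ =>
          div_nonneg (Jl_nonneg hpXV _ _) (pYl_nonneg hpXV _ _)))
      (Finset.mem_univ (f vL))
  have hsum_u : ∑ vL : Fin L → 𝒱, ∑ yL : Fin L → 𝒴,
      PYf pXV f yL * ∏ ℓ, Jl pXV f ℓ (vL ℓ, yL ℓ) / pYl pXV f ℓ (yL ℓ) ≤ 1 := by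
    rw [Finset.sum_comm]
    have h2 : ∀ yL : Fin L → 𝒴, ∑ vL : Fin L → 𝒱,
        PYf pXV f yL * ∏ ℓ, Jl pXV f ℓ (vL ℓ, yL ℓ) / pYl pXV f ℓ (yL ℓ)
        ≤ PYf pXV f yL := by
      intro yL
      rw [← Finset.mul_sum]
      have h3 : ∑ vL : Fin L → 𝒱, ∏ ℓ, Jl pXV f ℓ (vL ℓ, yL ℓ) / pYl pXV f ℓ (yL ℓ) ≤ 1 := by
        rw [sum_pi_prod' (fun ℓ c => Jl pXV f ℓ (c, yL ℓ) / pYl pXV f ℓ (yL ℓ))]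
        apply Finset.prod_le_one
        · intro ℓ _
          exact Finset.sum_nonneg fun v _ =>
            div_nonneg (Jl_nonneg hpXV _ _) (pYl_nonneg hpXV _ _)
        · intro ℓ _
          rw [← Finset.sum_div]
          exact div_self_le_one _
      calc PYf pXV f yL * ∑ vL : Fin L → 𝒱,
            ∏ ℓ, Jl pXV f ℓ (vL ℓ, yL ℓ) / pYl pXV f ℓ (yL ℓ)
          ≤ PYf pXV f yL * 1 := mul_le_mul_of_nonneg_left h3 (PYf_nonneg hpXV _)
        _ = PYf pXV f yL := mul_one _
    calc ∑ yL : Fin L → 𝒴, ∑ vL : Fin L → 𝒱,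
          PYf pXV f yL * ∏ ℓ, Jl pXV f ℓ (vL ℓ, yL ℓ) / pYl pXV f ℓ (yL ℓ)
        ≤ ∑ yL : Fin L → 𝒴, PYf pXV f yL := Finset.sum_le_sum fun yL _ => h2 yL
      _ = 1 := PYf_sum hpXV
  have hPt : ∑ vL : Fin L → 𝒱, Pprod pXV vL * t vL ≤ 1 :=
    le_trans (Finset.sum_le_sum fun vL _ => le_trans (hPt_le_u vL) (hu_le vL)) hsum_u
  have main := Finset.sum_le_sum (s := (Finset.univ : Finset (Fin L → 𝒱)))
    (fun vL _ => step1 vL)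
  rw [Finset.sum_add_distrib, Finset.sum_sub_distrib, P_sum hpXV] at main
  linarith

private lemma S3 (hpXV : (∀ z, 0 ≤ pXV z) ∧ ∑ z, pXV z = 1) (v0 : 𝒱) :
    - ∑ vL, Pprod pXV vL * Real.log (PYf pXV f (f vL))
      ≤ Real.log ((Finset.univ.image f).card) := by
  set T := Finset.univ.image f with hT
  have hTne : T.Nonempty :=
    ⟨f (fun _ => v0), Finset.mem_image_of_mem f (Finset.mem_univ _)⟩
  have hN : (0:ℝ) < T.card := by exact_mod_cast Finset.card_pos.mpr hTne
  have hPYfil : ∀ y : Fin L → 𝒴,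
      ∑ vL ∈ Finset.univ.filter (fun vL => f vL = y), Pprod pXV vL = PYf pXV f y := by
    intro y
    rw [Finset.sum_filter]
    rfl
  have fiber1 : ∑ vL, Pprod pXV vL * Real.log (PYf pXV f (f vL))
      = ∑ y ∈ T, PYf pXV f y * Real.log (PYf pXV f y) := by
    rw [← Finset.sum_fiberwise_of_maps_to
      (fun vL _ => Finset.mem_image_of_mem f (Finset.mem_univ vL))
      (fun vL => Pprod pXV vL * Real.log (PYf pXV f (f vL)))]
    apply Finset.sum_congr rfl
    intro y hy
    have hcg : ∀ vL ∈ Finset.univ.filter (fun vL => f vL = y),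
        Pprod pXV vL * Real.log (PYf pXV f (f vL))
          = Pprod pXV vL * Real.log (PYf pXV f y) := by
      intro vL hvL
      rw [(Finset.mem_filter.mp hvL).2]
    rw [Finset.sum_congr rfl hcg, ← Finset.sum_mul, hPYfil]
  have fiber2 : ∑ y ∈ T, PYf pXV f y = 1 := by
    rw [Finset.sum_congr rfl (fun y _ => (hPYfil y).symm),
      Finset.sum_fiberwise_of_maps_to
        (fun vL _ => Finset.mem_image_of_mem f (Finset.mem_univ vL))]
    exact P_sum hpXV
  have claim : ∀ y ∈ T, -(PYf pXV f y * Real.log (PYf pXV f y))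
      - PYf pXV f y * Real.log T.card ≤ 1 / T.card - PYf pXV f y := by
    intro y _
    rcases eq_or_lt_of_le (PYf_nonneg (f := f) hpXV y) with h0 | hpos
    · rw [← h0]
      simp
    · have h1 : -(PYf pXV f y * Real.log (PYf pXV f y)) - PYf pXV f y * Real.log T.card
          = PYf pXV f y * Real.log ((PYf pXV f y * T.card)⁻¹) := by
        rw [Real.log_inv, Real.log_mul (ne_of_gt hpos) (ne_of_gt hN)]
        ring
      rw [h1]
      have hlog := Real.log_le_sub_one_of_pos
        (show (0:ℝ) < (PYf pXV f y * T.card)⁻¹ by positivity)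
      calc PYf pXV f y * Real.log ((PYf pXV f y * T.card)⁻¹)
          ≤ PYf pXV f y * ((PYf pXV f y * T.card)⁻¹ - 1) :=
            mul_le_mul_of_nonneg_left hlog hpos.le
        _ = 1 / T.card - PYf pXV f y := by
            rw [mul_sub, mul_one, mul_inv, ← mul_assoc,
              mul_inv_cancel₀ (ne_of_gt hpos), one_mul, one_div]
  have hsum := Finset.sum_le_sum claim
  rw [Finset.sum_sub_distrib, ← Finset.sum_mul, fiber2, one_mul,
    Finset.sum_sub_distrib, Finset.sum_const, fiber2, nsmul_eq_mul] at hsum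
  have hcardN : (T.card : ℝ) * (1 / T.card) = 1 := by field_simp
  rw [hcardN] at hsum
  have hneg : ∑ y ∈ T, -(PYf pXV f y * Real.log (PYf pXV f y))
      = - ∑ y ∈ T, PYf pXV f y * Real.log (PYf pXV f y) := by
    rw [← Finset.sum_neg_distrib]
  rw [hneg] at hsum
  rw [fiber1]
  linarith

private lemma emp_eq (x : Fin L → 𝒳) (y : Fin L → 𝒴) (w : 𝒳 × 𝒴) :
    empirical x y w = (∑ ℓ, if x ℓ = w.1 ∧ y ℓ = w.2 then (1:ℝ) else 0) / L := by
  unfold empirical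
  congr 1
  rw [Finset.card_filter]
  push_cast
  rfl

private lemma emp_dist (hL : 0 < L) (x : Fin L → 𝒳) (y : Fin L → 𝒴) :
    (∀ w, 0 ≤ empirical x y w) ∧ ∑ w, empirical x y w = 1 := by
  constructor
  · intro w
    unfold empirical
    positivity
  · rw [Finset.sum_congr rfl (fun w _ => emp_eq x y w), ← Finset.sum_div,
      Finset.sum_comm]
    have h1 : ∀ ℓ : Fin L, ∑ w : 𝒳 × 𝒴, (if x ℓ = w.1 ∧ y ℓ = w.2 then (1:ℝ) else 0) = 1 := by
      intro ℓ
      rw [Fintype.sum_prod_type]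
      simp only [ite_and]
      have h2 : ∀ a : 𝒳, (∑ b : 𝒴, if x ℓ = a then if y ℓ = b then (1:ℝ) else 0 else 0)
          = if x ℓ = a then (1:ℝ) else 0 := by
        intro a
        by_cases h : x ℓ = a
        · simp only [if_pos h]
          rw [Finset.sum_ite_eq Finset.univ (y ℓ) (fun _ => (1:ℝ))]
          simp
        · simp [h]
      rw [Finset.sum_congr rfl (fun a _ => h2 a),
        Finset.sum_ite_eq Finset.univ (x ℓ) (fun _ => (1:ℝ))]
      simp
    rw [Finset.sum_congr rfl (fun ℓ _ => h1 ℓ), Finset.sum_const,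
      Finset.card_univ, Fintype.card_fin, nsmul_eq_mul, mul_one]
    field_simp

private lemma claim_x (hpXV : (∀ z, 0 ≤ pXV z) ∧ ∑ z, pXV z = 1) (ℓ : Fin L)
    (a : 𝒳) (vL : Fin L → 𝒱) :
    ∑ x : Fin L → 𝒳, (∏ j, pXV (x j, vL j)) * (if x ℓ = a then (1:ℝ) else 0)
      = ∏ j, (if j = ℓ then pXV (a, vL j) else margY pXV (vL j)) := by
  have step : ∀ x : Fin L → 𝒳, (∏ j, pXV (x j, vL j)) * (if x ℓ = a then (1:ℝ) else 0)
      = ∏ j, (if j = ℓ then (if x j = a then pXV (x j, vL j) else 0) else pXV (x j, vL j)) := by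
    intro x
    by_cases h : x ℓ = a
    · rw [if_pos h, mul_one]
      apply Finset.prod_congr rfl
      intro j _
      by_cases hj : j = ℓ
      · subst hj; rw [if_pos rfl, if_pos h]
      · rw [if_neg hj]
    · rw [if_neg h, mul_zero]
      symm
      apply Finset.prod_eq_zero (Finset.mem_univ ℓ)
      rw [if_pos rfl, if_neg h]
  rw [Finset.sum_congr rfl (fun x _ => step x),
    sum_pi_prod' (fun j c => if j = ℓ then (if c = a then pXV (c, vL j) else 0) else pXV (c, vL j))]
  apply Finset.prod_congr rfl
  intro j _
  by_cases hj : j = ℓ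
  · simp only [if_pos hj]
    rw [Finset.sum_ite_eq' Finset.univ a (fun c => pXV (c, vL j))]
    simp
  · simp only [if_neg hj]
    rfl

private lemma claim_key (hpXV : (∀ z, 0 ≤ pXV z) ∧ ∑ z, pXV z = 1) (ℓ : Fin L)
    (a : 𝒳) (vL : Fin L → 𝒱) :
    (pXV (a, vL ℓ) / margY pXV (vL ℓ)) * Pprod pXV vL
      = ∏ j, (if j = ℓ then pXV (a, vL j) else margY pXV (vL j)) := by
  by_cases h : margY pXV (vL ℓ) = 0
  · have h1 : Pprod pXV vL = 0 := Finset.prod_eq_zero (Finset.mem_univ ℓ) h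
    have h2 : pXV (a, vL ℓ) = 0 := pXV_eq_zero hpXV h a
    rw [h1, mul_zero]
    symm
    apply Finset.prod_eq_zero (Finset.mem_univ ℓ)
    rw [if_pos rfl, h2]
  · have hP : Pprod pXV vL
        = margY pXV (vL ℓ) * ∏ j ∈ Finset.univ.erase ℓ, margY pXV (vL j) :=
      (Finset.mul_prod_erase Finset.univ (fun j => margY pXV (vL j)) (Finset.mem_univ ℓ)).symm
    have hA : ∏ j, (if j = ℓ then pXV (a, vL j) else margY pXV (vL j))
        = pXV (a, vL ℓ) * ∏ j ∈ Finset.univ.erase ℓ, margY pXV (vL j) := by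
      rw [← Finset.mul_prod_erase Finset.univ _ (Finset.mem_univ ℓ), if_pos rfl]
      congr 1
      apply Finset.prod_congr rfl
      intro j hj
      rw [if_neg (Finset.mem_erase.mp hj).1]
    rw [hP, hA, div_mul_eq_mul_div, ← mul_assoc, mul_comm (pXV (a, vL ℓ)) _, mul_assoc,
      mul_comm (margY pXV (vL ℓ)) _, mul_div_assoc, div_self h, mul_one]

private lemma pXY_eq (hpXV : (∀ z, 0 ≤ pXV z) ∧ ∑ z, pXV z = 1) (hL : 0 < L) (y0 : 𝒴)
    (w : 𝒳 × 𝒴) :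
    ∑ v, pXV (w.1, v) * Wch pXV f y0 v w.2
      = ∑ q : (Fin L → 𝒳) × (Fin L → 𝒱), (∏ ℓ, pXV (q.1 ℓ, q.2 ℓ)) * empirical q.1 (f q.2) w := by
  have hL0 : (L:ℝ) ≠ 0 := Nat.cast_ne_zero.mpr hL.ne'
  -- common middle expression
  set T : Fin L → ℝ := fun ℓ => ∑ vL : Fin L → 𝒱,
    (∏ j, if j = ℓ then pXV (w.1, vL j) else margY pXV (vL j))
      * (if f vL ℓ = w.2 then (1:ℝ) else 0) with hTdef
  -- RHS = (∑ ℓ, T ℓ) / L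
  have hRHS : ∑ q : (Fin L → 𝒳) × (Fin L → 𝒱),
      (∏ ℓ, pXV (q.1 ℓ, q.2 ℓ)) * empirical q.1 (f q.2) w = (∑ ℓ, T ℓ) / L := by
    rw [Fintype.sum_prod_type]
    have e1 : ∀ (x : Fin L → 𝒳) (vL : Fin L → 𝒱),
        (∏ ℓ, pXV (x ℓ, vL ℓ)) * empirical x (f vL) w
          = (∑ ℓ, (∏ j, pXV (x j, vL j)) * ((if x ℓ = w.1 then (1:ℝ) else 0)
              * (if f vL ℓ = w.2 then (1:ℝ) else 0))) / L := by
      intro x vL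
      rw [emp_eq, ← Finset.mul_sum, mul_div_assoc]
      congr 2
      apply Finset.sum_congr rfl
      intro ℓ _
      by_cases h1 : x ℓ = w.1 <;> by_cases h2 : f vL ℓ = w.2 <;> simp [h1, h2]
    rw [Finset.sum_congr rfl (fun x _ => Finset.sum_congr rfl (fun vL _ => e1 x vL))]
    simp_rw [← Finset.sum_div]
    congr 1
    have s1 : ∀ x : Fin L → 𝒳, ∑ vL : Fin L → 𝒱, ∑ ℓ : Fin L,
        (∏ j, pXV (x j, vL j)) * ((if x ℓ = w.1 then (1:ℝ) else 0)
          * (if f vL ℓ = w.2 then (1:ℝ) else 0))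
        = ∑ ℓ : Fin L, ∑ vL : Fin L → 𝒱,
        (∏ j, pXV (x j, vL j)) * ((if x ℓ = w.1 then (1:ℝ) else 0)
          * (if f vL ℓ = w.2 then (1:ℝ) else 0)) := fun x => Finset.sum_comm
    rw [Finset.sum_congr rfl (fun x _ => s1 x)]
    have s2 : ∑ x : Fin L → 𝒳, ∑ ℓ : Fin L, (∑ vL : Fin L → 𝒱,
        (∏ j, pXV (x j, vL j)) * ((if x ℓ = w.1 then (1:ℝ) else 0)
          * (if f vL ℓ = w.2 then (1:ℝ) else 0)))
        = ∑ ℓ : Fin L, ∑ x : Fin L → 𝒳, (∑ vL : Fin L → 𝒱,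
        (∏ j, pXV (x j, vL j)) * ((if x ℓ = w.1 then (1:ℝ) else 0)
          * (if f vL ℓ = w.2 then (1:ℝ) else 0))) := Finset.sum_comm
    rw [s2]
    apply Finset.sum_congr rfl
    intro ℓ _
    rw [hTdef]
    simp only
    rw [Finset.sum_comm]
    apply Finset.sum_congr rfl
    intro vL _
    rw [← claim_x hpXV ℓ w.1 vL, Finset.sum_mul]
    apply Finset.sum_congr rfl
    intro x _
    ring
  -- LHS = (∑ ℓ, T ℓ) / L
  have hLHS : ∑ v, pXV (w.1, v) * Wch pXV f y0 v w.2 = (∑ ℓ, T ℓ) / L := by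
    have step_v : ∀ v, pXV (w.1, v) * Wch pXV f y0 v w.2
        = (pXV (w.1, v) / margY pXV v) * muJ pXV f (v, w.2) := by
      intro v
      unfold Wch
      by_cases h : margY pXV v = 0
      · rw [if_pos h, pXV_eq_zero hpXV h w.1]
        simp
      · rw [if_neg h]
        field_simp
    rw [Finset.sum_congr rfl (fun v _ => step_v v)]
    have e2 : ∀ v, (pXV (w.1, v) / margY pXV v) * muJ pXV f (v, w.2)
        = (∑ ℓ, (pXV (w.1, v) / margY pXV v) * Jl pXV f ℓ (v, w.2)) / L := by
      intro v
      unfold muJ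
      rw [← Finset.mul_sum, mul_div_assoc]
    rw [Finset.sum_congr rfl (fun v _ => e2 v), ← Finset.sum_div]
    congr 1
    rw [Finset.sum_comm]
    apply Finset.sum_congr rfl
    intro ℓ _
    unfold Jl
    rw [hTdef]
    simp only
    simp_rw [Finset.mul_sum]
    rw [Finset.sum_comm]
    apply Finset.sum_congr rfl
    intro vL _
    simp only [Prod.mk.injEq, ite_and, mul_ite, mul_zero]
    rw [Finset.sum_ite_eq Finset.univ (vL ℓ) (fun v => if f vL ℓ = w.2
      then pXV (w.1, v) / margY pXV v * Pprod pXV vL else 0)]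
    simp only [Finset.mem_univ, if_true]
    by_cases h2 : f vL ℓ = w.2
    · rw [if_pos h2, if_pos h2, mul_one]
      exact claim_key hpXV ℓ w.1 vL
    · rw [if_neg h2, if_neg h2]
  rw [hLHS, hRHS]

end CDO

/-- Rate lower bound for the quantum CDO rate distortion problem: any block code
of rate `R` whose expected distortion (for a convex distortion measure `d` of the
empirical joint distribution) is at most `Δ` satisfies
`R ≥ min_{P_{Y|V} : d(P_XY) ≤ Δ} I(V;Y)`. -/
theorem quantum_CDO_rate_lower_bound
    {𝒳 𝒱 𝒴 : Type*} [Fintype 𝒳] [Fintype 𝒱] [Fintype 𝒴]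
    [DecidableEq 𝒳] [DecidableEq 𝒱] [DecidableEq 𝒴]
    (pXV : 𝒳 × 𝒱 → ℝ) (hpXV : IsDist pXV)
    (d : (𝒳 × 𝒴 → ℝ) → ℝ)
    (hconv : ConvexOn ℝ {q : 𝒳 × 𝒴 → ℝ | (∀ w, 0 ≤ q w) ∧ ∑ w, q w = 1} d)
    (Δ : ℝ) (L : ℕ) (hL : 0 < L) (R : ℝ)
    (f : (Fin L → 𝒱) → Fin L → 𝒴)
    (hcard : ((Finset.univ.image f).card : ℝ) ≤ (2 : ℝ) ^ ((L : ℝ) * R))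
    (hdist : ∑ x : Fin L → 𝒳, ∑ v : Fin L → 𝒱,
        (∏ ℓ, pXV (x ℓ, v ℓ)) * d (empirical x (f v)) ≤ Δ) :
    sInf {r : ℝ | ∃ W : 𝒱 → 𝒴 → ℝ, IsChannel W ∧
        d (fun w => ∑ v, pXV (w.1, v) * W v w.2) ≤ Δ ∧
        r = mi (fun z : 𝒱 × 𝒴 => margY pXV z.1 * W z.1 z.2)} ≤ R := by
    classical
  obtain ⟨hp0, hp1⟩ := hpXV
  have hpXV' : (∀ z, 0 ≤ pXV z) ∧ ∑ z, pXV z = 1 := ⟨hp0, hp1⟩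
  have hV : Nonempty 𝒱 := by
    by_contra h
    rw [not_nonempty_iff] at h
    have huniv : (Finset.univ : Finset (𝒳 × 𝒱)) = ∅ := by
      apply Finset.univ_eq_empty
    rw [huniv, Finset.sum_empty] at hp1
    norm_num at hp1
  obtain ⟨v0⟩ := hV
  set y0 : 𝒴 := f (fun _ => v0) ⟨0, hL⟩ with hy0
  set W : 𝒱 → 𝒴 → ℝ := Wch pXV f y0 with hW
  have hch : IsChannel W := fun v => Wch_channel hpXV' hL y0 v
  have hd : d (fun w => ∑ v, pXV (w.1, v) * W v w.2) ≤ Δ := by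
    have hwt_nonneg : ∀ q : (Fin L → 𝒳) × (Fin L → 𝒱),
        0 ≤ ∏ ℓ, pXV (q.1 ℓ, q.2 ℓ) := fun q => Finset.prod_nonneg fun ℓ _ => hp0 _
    have hwt_sum : ∑ q : (Fin L → 𝒳) × (Fin L → 𝒱), ∏ ℓ, pXV (q.1 ℓ, q.2 ℓ) = 1 := by
      rw [Fintype.sum_prod_type, Finset.sum_comm]
      have hx : ∀ vL : Fin L → 𝒱, ∑ x : Fin L → 𝒳, ∏ ℓ, pXV (x ℓ, vL ℓ)
          = Pprod pXV vL := by
        intro vL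
        rw [sum_pi_prod' (fun ℓ c => pXV (c, vL ℓ))]
        rfl
      rw [Finset.sum_congr rfl (fun vL _ => hx vL)]
      exact P_sum hpXV'
    have hjensen := hconv.map_sum_le (t := Finset.univ)
      (w := fun q : (Fin L → 𝒳) × (Fin L → 𝒱) => ∏ ℓ, pXV (q.1 ℓ, q.2 ℓ))
      (p := fun q => empirical q.1 (f q.2))
      (fun q _ => hwt_nonneg q) hwt_sum (fun q _ => emp_dist hL q.1 (f q.2))
    have harg : (∑ q : (Fin L → 𝒳) × (Fin L → 𝒱),
        (∏ ℓ, pXV (q.1 ℓ, q.2 ℓ)) • empirical q.1 (f q.2))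
        = (fun w => ∑ v, pXV (w.1, v) * W v w.2) := by
      funext w
      rw [Finset.sum_apply]
      simp only [Pi.smul_apply, smul_eq_mul]
      rw [hW]
      exact (pXY_eq hpXV' hL y0 w).symm
    rw [harg] at hjensen
    have hsum_eq : ∑ q : (Fin L → 𝒳) × (Fin L → 𝒱),
        (∏ ℓ, pXV (q.1 ℓ, q.2 ℓ)) • d (empirical q.1 (f q.2))
        = ∑ x : Fin L → 𝒳, ∑ v : Fin L → 𝒱,
          (∏ ℓ, pXV (x ℓ, v ℓ)) * d (empirical x (f v)) := by
      rw [Fintype.sum_prod_type]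
      simp [smul_eq_mul]
    exact le_trans (le_of_le_of_eq hjensen hsum_eq) hdist
  have hmile : mi (fun z : 𝒱 × 𝒴 => margY pXV z.1 * W z.1 z.2) ≤ R := by
    have heq : (fun z : 𝒱 × 𝒴 => margY pXV z.1 * W z.1 z.2) = muJ pXV f := by
      funext z; rw [hW]; exact muJ_eq hpXV' hL y0 z
    rw [heq]
    have h1 := le_trans (S1 (f := f) hpXV' hL) (le_trans (S2 hpXV' hL) (S3 hpXV' v0))
    have hN1 : (1:ℝ) ≤ ((Finset.univ.image f).card : ℝ) := by
      have hne : (Finset.univ.image f).Nonempty :=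
        ⟨f (fun _ => v0), Finset.mem_image_of_mem f (Finset.mem_univ _)⟩
      exact_mod_cast Finset.card_pos.mpr hne
    have hlog2 : Real.log ((Finset.univ.image f).card) ≤ ((L:ℝ) * R) * Real.log 2 := by
      calc Real.log ((Finset.univ.image f).card)
          ≤ Real.log ((2:ℝ) ^ ((L:ℝ) * R)) := Real.log_le_log (by linarith) hcard
        _ = ((L:ℝ) * R) * Real.log 2 := Real.log_rpow (by norm_num) _
    have hlogN_nonneg : 0 ≤ Real.log ((Finset.univ.image f).card) := Real.log_nonneg hN1
    have hlog2pos : 0 < Real.log 2 := Real.log_pos (by norm_num)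
    have hlog2le1 : Real.log 2 ≤ 1 := by
      have := Real.log_le_sub_one_of_pos (show (0:ℝ) < 2 by norm_num)
      linarith
    have hLR : 0 ≤ (L:ℝ) * R := by
      by_contra hneg
      push_neg at hneg
      nlinarith
    have hfin : (L:ℝ) * mi (muJ pXV f) ≤ (L:ℝ) * R := by
      calc (L:ℝ) * mi (muJ pXV f) ≤ Real.log ((Finset.univ.image f).card) := h1
        _ ≤ ((L:ℝ)*R) * Real.log 2 := hlog2
        _ ≤ ((L:ℝ)*R) * 1 := by nlinarith
        _ = (L:ℝ)*R := mul_one _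
    have hLpos : (0:ℝ) < L := by exact_mod_cast hL
    exact le_of_mul_le_mul_left hfin hLpos
  apply csInf_le_of_le (b := mi (fun z : 𝒱 × 𝒴 => margY pXV z.1 * W z.1 z.2))
  · refine ⟨0, ?_⟩
    rintro r ⟨W', hW', _, rfl⟩
    apply mi_nonneg
    · intro z
      exact mul_nonneg (pV_nonneg ⟨hp0, hp1⟩ _) ((hW' z.1).1 z.2)
    · rw [Fintype.sum_prod_type]
      calc ∑ v, ∑ y, margY pXV v * W' v y = ∑ v, margY pXV v * ∑ y, W' v y := by
            simp [Finset.mul_sum]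
        _ = ∑ v, margY pXV v := by
            apply Finset.sum_congr rfl
            intro v _
            rw [(hW' v).2, mul_one]
        _ = 1 := pV_sum ⟨hp0, hp1⟩
  · exact ⟨W, hch, hd, rfl⟩
  · exact hmile
end

section
/- In the visible case with zero distortion, the rate distortion function equals the mutual information between the state and the measurement: R(0) = I(X;Z) = h(pα₁ + (1−p)α₂) − [p·h(α₁) + (1−p)·h(α₂)] for the two-coin source. -/
open scoped BigOperators

/-- Base-2 mutual information `I(X;Y) = D(P_XY ‖ P_X P_Y)`. -/
noncomputable def mi2 {α β : Type*} [Fintype α] [Fintype β] (p : α × β → ℝ) : ℝ :=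
  ∑ z : α × β, (if p z = 0 then 0 else p z * Real.logb 2 (p z / (margX p z.1 * margY p z.2)))

/-- Binary entropy function `h(α) = −α log₂ α − (1−α) log₂ (1−α)`. -/
noncomputable def binEnt (a : ℝ) : ℝ :=
  -(a * Real.logb 2 a) - (1 - a) * Real.logb 2 (1 - a)

/-!
Zero distortion pins the joint law `P_X W` to `P_{XZ}`, and `P_{XZ}` is itself produced by the
channel `W(z | x) = P(Z = z | X = x)`; so the feasible rates form the singleton `{I(X;Z)}`.
Writing `I(X;Z) = H(X) + H(Z) - H(X,Z)` and expanding `H(X,Z) = H(X) + ∑ₓ P(x) H(Z | X = x)` by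
the chain rule leaves `H(Z) - ∑ₓ P(x) H(Z | X = x)`, which for two coins is a difference of
binary entropies.
-/

open Real Finset

lemma mul_mul_logb_mul (b x y : ℝ) :
    x * y * logb b (x * y) = x * y * logb b x + x * y * logb b y := by
  rcases eq_or_ne x 0 with rfl | hx
  · simp
  rcases eq_or_ne y 0 with rfl | hy
  · simp
  rw [logb_mul hx hy, mul_add]

noncomputable def entropy2 {ι : Type*} [Fintype ι] (q : ι → ℝ) : ℝ :=
  -∑ i, q i * logb 2 (q i)

lemma entropy2_bool (a : ℝ) : entropy2 (fun b : Bool => if b then a else 1 - a) = binEnt a := by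
  simp only [entropy2, binEnt, Fintype.sum_bool, if_true, Bool.false_eq_true, if_false]
  ring

section Entropy

variable {α β : Type*}

def jointDist (q : α → ℝ) (W : α → β → ℝ) : α × β → ℝ :=
  fun w => q w.1 * W w.1 w.2

lemma jointDist_nonneg [Fintype β] {q : α → ℝ} (hq : 0 ≤ q) {W : α → β → ℝ} (hW : IsChannel W) :
    0 ≤ jointDist q W :=
  fun w => mul_nonneg (hq w.1) ((hW w.1).1 w.2)

variable [Fintype α] [Fintype β]

lemma margX_ne_zero {p : α × β → ℝ} (hp : 0 ≤ p) {z : α × β} (hz : p z ≠ 0) :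
    margX p z.1 ≠ 0 :=
  (((hp z).lt_of_ne' hz).trans_le (single_le_sum (fun b _ => hp (z.1, b)) (mem_univ z.2))).ne'

lemma margY_ne_zero {p : α × β → ℝ} (hp : 0 ≤ p) {z : α × β} (hz : p z ≠ 0) :
    margY p z.2 ≠ 0 :=
  (((hp z).lt_of_ne' hz).trans_le (single_le_sum (fun a _ => hp (a, z.2)) (mem_univ z.1))).ne'

lemma sum_mul_logb_margX (p : α × β → ℝ) :
    ∑ z, p z * logb 2 (margX p z.1) = ∑ a, margX p a * logb 2 (margX p a) := by
  simp only [Fintype.sum_prod_type, margX, sum_mul]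

lemma sum_mul_logb_margY (p : α × β → ℝ) :
    ∑ z, p z * logb 2 (margY p z.2) = ∑ b, margY p b * logb 2 (margY p b) := by
  simp only [Fintype.sum_prod_type_right, margY, sum_mul]

lemma mi2_eq_entropy2 {p : α × β → ℝ} (hp : 0 ≤ p) :
    mi2 p = entropy2 (margX p) + entropy2 (margY p) - entropy2 p := by
  have hterm : ∀ z, (if p z = 0 then 0 else p z * logb 2 (p z / (margX p z.1 * margY p z.2)))
      = p z * logb 2 (p z) - p z * logb 2 (margX p z.1) - p z * logb 2 (margY p z.2) := by
    intro z
    by_cases hz : p z = 0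
    · simp [hz]
    have hX := margX_ne_zero hp hz
    have hY := margY_ne_zero hp hz
    rw [if_neg hz, logb_div hz (mul_ne_zero hX hY), logb_mul hX hY]
    ring
  simp only [mi2, hterm, sum_sub_distrib, sum_mul_logb_margX, sum_mul_logb_margY, entropy2]
  ring

lemma margX_jointDist (q : α → ℝ) {W : α → β → ℝ} (hW : ∀ a, ∑ b, W a b = 1) :
    margX (jointDist q W) = q := by
  ext a
  simp only [margX, jointDist, ← mul_sum, hW, mul_one]

lemma entropy2_jointDist (q : α → ℝ) {W : α → β → ℝ} (hW : ∀ a, ∑ b, W a b = 1) :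
    entropy2 (jointDist q W) = entropy2 q + ∑ a, q a * entropy2 (W a) := by
  have hrow : ∀ a, ∑ b, q a * W a b * logb 2 (q a) = q a * logb 2 (q a) := fun a => by
    rw [← sum_mul, ← mul_sum, hW, mul_one]
  simp only [entropy2, jointDist, Fintype.sum_prod_type, mul_mul_logb_mul, sum_add_distrib, hrow]
  simp only [mul_neg, sum_neg_distrib, mul_sum, mul_assoc]
  ring

lemma mi2_jointDist {q : α → ℝ} (hq : 0 ≤ q) {W : α → β → ℝ} (hW : IsChannel W) :
    mi2 (jointDist q W) = entropy2 (margY (jointDist q W)) - ∑ a, q a * entropy2 (W a) := by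
  have hrow : ∀ a, ∑ b, W a b = 1 := fun a => (hW a).2
  rw [mi2_eq_entropy2 (jointDist_nonneg hq hW), margX_jointDist q hrow,
    entropy2_jointDist q hrow]
  ring

lemma sInf_mi2_of_jointDist_eq {q : α → ℝ} {P : α × β → ℝ} {W₀ : α → β → ℝ}
    (hW₀ : IsChannel W₀) (hP : jointDist q W₀ = P) :
    sInf {r : ℝ | ∃ W : α → β → ℝ, IsChannel W ∧ (∀ x z, q x * W x z = P (x, z)) ∧
      r = mi2 (fun w : α × β => q w.1 * W w.1 w.2)} = mi2 P := by
  suffices h : {r : ℝ | ∃ W : α → β → ℝ, IsChannel W ∧ (∀ x z, q x * W x z = P (x, z)) ∧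
      r = mi2 (fun w : α × β => q w.1 * W w.1 w.2)} = {mi2 P} by
    rw [h, csInf_singleton]
  ext r
  constructor
  · rintro ⟨W, -, hWP, rfl⟩
    exact congrArg mi2 (funext fun w => hWP w.1 w.2)
  · rintro rfl
    exact ⟨W₀, hW₀, fun x z => congrFun hP (x, z), congrArg mi2 hP.symm⟩

end Entropy

/-- Two-coin source, visible case, zero distortion: the rate distortion function
(the minimum of `I(X;Y)` over channels forced to reproduce `P_{XZ}`) equals
`I(X;Z) = h(pα₁ + (1−p)α₂) − [p h(α₁) + (1−p) h(α₂)]`. -/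
theorem two_coin_visible_zero_distortion (p α₁ α₂ : ℝ)
    (hp : 0 ≤ p ∧ p ≤ 1) (h1 : 0 ≤ α₁ ∧ α₁ ≤ 1) (h2 : 0 ≤ α₂ ∧ α₂ ≤ 1)
    (px : Bool → ℝ) (hpx : ∀ x, px x = if x then p else 1 - p)
    (pXZ : Bool × Bool → ℝ)
    (hpXZ : ∀ x z, pXZ (x, z) =
      px x * (if z then (if x then α₁ else α₂) else 1 - (if x then α₁ else α₂))) :
    sInf {r : ℝ | ∃ W : Bool → Bool → ℝ, IsChannel W ∧
          (∀ x z, px x * W x z = pXZ (x, z)) ∧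
          r = mi2 (fun w : Bool × Bool => px w.1 * W w.1 w.2)}
        = mi2 pXZ ∧
      mi2 pXZ = binEnt (p * α₁ + (1 - p) * α₂) - (p * binEnt α₁ + (1 - p) * binEnt α₂) := by
  set W₀ : Bool → Bool → ℝ :=
    fun x z => if z then (if x then α₁ else α₂) else 1 - (if x then α₁ else α₂)
  have hP : jointDist px W₀ = pXZ := funext fun w => (hpXZ w.1 w.2).symm
  have hW₀ : IsChannel W₀ := fun x =>
    ⟨fun z => by cases x <;> cases z <;> simp [W₀] <;> linarith, by simp [W₀]⟩
  have hpx_nonneg : 0 ≤ px := fun x => by cases x <;> simp [hpx] <;> linarith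
  have hZ : margY pXZ =
      fun z => if z then p * α₁ + (1 - p) * α₂ else 1 - (p * α₁ + (1 - p) * α₂) := by
    ext z
    simp only [← hP, margY, jointDist, W₀, hpx, Fintype.sum_bool]
    cases z <;> simp only [if_true, Bool.false_eq_true, if_false]
    ring
  refine ⟨sInf_mi2_of_jointDist_eq hW₀ hP, ?_⟩
  rw [← hP, mi2_jointDist hpx_nonneg hW₀, hP, hZ, entropy2_bool]
  simp [W₀, entropy2_bool, hpx]
end

section
/- Discontinuity of the blind zero-distortion rate: for the two-coin source with p ∈ (0,1), the blind zero-distortion rate R(0) equals h(pα₁ + (1−p)α₂) whenever α₁ ≠ α₂ (with α₁, α₂ ∈ (0,1)), but R(0) = 0 when α₁ = α₂; hence R(0) is a discontinuous function of α₂ at α₂ = α₁. -/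
/-!
When `α₁ ≠ α₂`, the two conditional laws of `Z` differ, so the consistency constraint
`P_{XY} = P_{XZ}` pins the test channel down to the identity `Y = Z`, and the rate is
`I(Z;Z) = H(Z) = h(pα₁ + (1-p)α₂)`. When `α₁ = α₂`, `Z` is independent of `X`, so the
channel that ignores `Z` and outputs a fresh sample of its law is consistent and costs nothing. As
`α₂ → α₁` the first value tends to `h(α₁) > 0`, not to `0`.
-/

open scoped BigOperators

/-- Prior on the two coins: `P_X(c₁) = p`, `P_X(c₂) = 1 − p`. -/
noncomputable def coinPX (p : ℝ) : Bool → ℝ := fun x => if x then p else 1 - p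

/-- Coin-toss channel: coin `c₁` shows heads with probability `α₁`,
coin `c₂` with probability `α₂`. -/
noncomputable def coinPZX (α₁ α₂ : ℝ) : Bool → Bool → ℝ :=
  fun x z => if z then (if x then α₁ else α₂) else 1 - (if x then α₁ else α₂)

/-- Blind zero-distortion rate for the two-coin source:
`R(0) = min { I(Z;Y) : P_{Y|Z} with induced P_XY = P_XZ }`. -/
noncomputable def blindRate (p α₁ α₂ : ℝ) : ℝ :=
  sInf {r : ℝ | ∃ W : Bool → Bool → ℝ, IsChannel W ∧
    (∀ x y, ∑ z, coinPX p x * coinPZX α₁ α₂ x z * W z y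
        = coinPX p x * coinPZX α₁ α₂ x y) ∧
    r = mi2 (fun w : Bool × Bool =>
        (∑ x, coinPX p x * coinPZX α₁ α₂ x w.1) * W w.1 w.2)}

open Real Filter Topology

section MutualInformation

variable {α β : Type*} [Fintype α] [Fintype β]

lemma le_margX {p : α × β → ℝ} (hp : ∀ z, 0 ≤ p z) (z : α × β) : p z ≤ margX p z.1 :=
  Finset.single_le_sum (f := fun b => p (z.1, b)) (fun _ _ => hp _) (Finset.mem_univ z.2)

lemma le_margY {p : α × β → ℝ} (hp : ∀ z, 0 ≤ p z) (z : α × β) : p z ≤ margY p z.2 :=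
  Finset.single_le_sum (f := fun a => p (a, z.2)) (fun _ _ => hp _) (Finset.mem_univ z.1)

lemma sum_margX (p : α × β → ℝ) : ∑ a, margX p a = ∑ z, p z :=
  (Fintype.sum_prod_type p).symm

lemma sum_margY (p : α × β → ℝ) : ∑ b, margY p b = ∑ z, p z :=
  (Fintype.sum_prod_type_right p).symm

lemma sub_le_mul_log_div {x y : ℝ} (hx : 0 < x) (hy : 0 < y) : x - y ≤ x * log (x / y) := by
  have h := mul_le_mul_of_nonneg_left (log_le_sub_one_of_pos (div_pos hy hx)) hx.le
  rw [log_div hy.ne' hx.ne'] at h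
  rw [log_div hx.ne' hy.ne']
  field_simp at h
  linarith

lemma sub_div_log_le_mul_logb_div {b x y : ℝ} (hb : 1 < b) (hx : 0 < x) (hy : 0 < y) :
    (x - y) / log b ≤ x * logb b (x / y) := by
  rw [logb, ← mul_div_assoc]
  exact div_le_div_of_nonneg_right (sub_le_mul_log_div hx hy) (log_pos hb).le

/-- Gibbs' inequality for `P_XY` against `P_X P_Y`. -/
lemma mi2_nonneg {p : α × β → ℝ} (hp : ∀ z, 0 ≤ p z) (hsum : ∑ z, p z = 1) : 0 ≤ mi2 p := by
  set q : α × β → ℝ := fun z => margX p z.1 * margY p z.2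
  have hq : ∀ z, 0 ≤ q z := fun z =>
    mul_nonneg ((hp z).trans (le_margX hp z)) ((hp z).trans (le_margY hp z))
  have hqsum : ∑ z, q z = 1 := by
    rw [Fintype.sum_prod_type, ← Finset.sum_mul_sum, sum_margX, sum_margY, hsum, one_mul]
  have hterm : ∀ z, (p z - q z) / log 2 ≤
      if p z = 0 then 0 else p z * logb 2 (p z / q z) := by
    intro z
    split_ifs with h
    · exact div_nonpos_of_nonpos_of_nonneg (by linarith [hq z, h]) (log_nonneg one_le_two)
    · have hpz : 0 < p z := (hp z).lt_of_ne' h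
      exact sub_div_log_le_mul_logb_div one_lt_two hpz
        (mul_pos (hpz.trans_le (le_margX hp z)) (hpz.trans_le (le_margY hp z)))
  calc (0 : ℝ) = ∑ z, (p z - q z) / log 2 := by
        rw [← Finset.sum_div, Finset.sum_sub_distrib, hsum, hqsum, sub_self, zero_div]
    _ ≤ mi2 p := Finset.sum_le_sum fun z _ => hterm z

lemma mi2_mul_eq_zero {f : α → ℝ} {g : β → ℝ} (hf : ∑ a, f a = 1) (hg : ∑ b, g b = 1) :
    mi2 (fun w : α × β => f w.1 * g w.2) = 0 := by
  refine Finset.sum_eq_zero fun z _ => ?_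
  have hmarg : margX (fun w : α × β => f w.1 * g w.2) z.1 *
      margY (fun w : α × β => f w.1 * g w.2) z.2 = f z.1 * g z.2 := by
    simp [margX, margY, ← Finset.mul_sum, ← Finset.sum_mul, hf, hg]
  split_ifs with h
  · rfl
  · rw [hmarg, div_self h, logb_one, mul_zero]

lemma mi2_diagonal [DecidableEq α] (f : α → ℝ) :
    mi2 (fun w : α × α => f w.1 * if w.1 = w.2 then 1 else 0) = ∑ a, -(f a * logb 2 (f a)) := by
  simp only [mi2, margX, margY, mul_ite, mul_one, mul_zero, Finset.sum_ite_eq,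
    Finset.sum_ite_eq', Finset.mem_univ, if_true, Fintype.sum_prod_type]
  refine Finset.sum_congr rfl fun a _ => ?_
  rw [Finset.sum_eq_single a (fun b _ hb => by simp [Ne.symm hb]) (by simp)]
  by_cases h : f a = 0
  · simp [h]
  · rw [if_pos rfl, if_neg h, div_mul_cancel_left₀ h, logb_inv, mul_neg]

lemma mi2_mul_channel_nonneg {f : α → ℝ} {W : α → β → ℝ} (hf0 : ∀ a, 0 ≤ f a) (hf : ∑ a, f a = 1) (hW : IsChannel W) :
    0 ≤ mi2 (fun w : α × β => f w.1 * W w.1 w.2) := by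
  refine mi2_nonneg (fun w => mul_nonneg (hf0 w.1) ((hW w.1).1 w.2)) ?_
  simp only [Fintype.sum_prod_type, ← Finset.mul_sum, (hW _).2, mul_one, hf]

lemma isChannel_diagonal [DecidableEq α] :
    IsChannel (fun a b : α => if a = b then (1 : ℝ) else 0) :=
  fun a => ⟨fun _ => ite_nonneg zero_le_one le_rfl, by simp⟩

end MutualInformation

lemma binEnt_eq_binEntropy_div (a : ℝ) : binEnt a = binEntropy a / log 2 := by
  simp only [binEnt, binEntropy, logb, log_inv]
  ring

lemma binEnt_pos {a : ℝ} (h0 : 0 < a) (h1 : a < 1) : 0 < binEnt a := by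
  rw [binEnt_eq_binEntropy_div]
  exact div_pos (binEntropy_pos h0 h1) (log_pos one_lt_two)

lemma binEnt_continuous : Continuous binEnt := by
  simp only [funext binEnt_eq_binEntropy_div]
  fun_prop

lemma sum_coinPX (q : ℝ) : ∑ x, coinPX q x = 1 := by
  simp [coinPX]

lemma coinPX_nonneg {q : ℝ} (h0 : 0 ≤ q) (h1 : q ≤ 1) (x : Bool) : 0 ≤ coinPX q x := by
  cases x <;> simp [coinPX, h0, h1]

lemma coinPZX_self (a : ℝ) (x : Bool) : coinPZX a a x = coinPX a := by
  funext z
  cases x <;> rfl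

lemma sum_coinPX_mul_coinPZX (p α₁ α₂ : ℝ) (z : Bool) :
    ∑ x, coinPX p x * coinPZX α₁ α₂ x z = coinPX (p * α₁ + (1 - p) * α₂) z := by
  simp only [coinPX, coinPZX, Fintype.sum_bool]
  cases z
  · simp only [Bool.false_eq_true, if_false, if_true]
    ring
  · simp only [Bool.false_eq_true, if_false, if_true]

lemma binEnt_eq_mi2_diagonal (q : ℝ) :
    binEnt q = mi2 (fun w : Bool × Bool => coinPX q w.1 * if w.1 = w.2 then 1 else 0) := by
  rw [mi2_diagonal, Fintype.sum_bool, binEnt]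
  simp only [coinPX, if_true, Bool.false_eq_true, if_false]
  ring

lemma eq_diagonal_of_consistent {p α₁ α₂ : ℝ} (hp0 : 0 < p) (hp1 : p < 1) (hα : α₂ ≠ α₁)
    {W : Bool → Bool → ℝ} (hW : IsChannel W)
    (hcons : ∀ x y, ∑ z, coinPX p x * coinPZX α₁ α₂ x z * W z y
        = coinPX p x * coinPZX α₁ α₂ x y) :
    W = fun z y => if z = y then 1 else 0 := by
  have h₁ : p * (α₁ * W true true + (1 - α₁) * W false true) = p * α₁ := by
    simpa [coinPX, coinPZX, mul_add, mul_assoc] using hcons true true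
  have h₂ : (1 - p) * (α₂ * W true true + (1 - α₂) * W false true) = (1 - p) * α₂ := by
    simpa [coinPX, coinPZX, mul_add, mul_assoc] using hcons false true
  have hdiff : (α₁ - α₂) * (W true true - W false true) = (α₁ - α₂) * 1 := by
    linear_combination mul_left_cancel₀ hp0.ne' h₁ - mul_left_cancel₀ (sub_ne_zero.2 hp1.ne') h₂
  have hgap := mul_left_cancel₀ (sub_ne_zero.2 hα.symm) hdiff
  obtain ⟨hT, hsumT⟩ := hW true
  obtain ⟨hF, hsumF⟩ := hW false
  rw [Fintype.sum_bool] at hsumT hsumF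
  have hTF := hT false
  have hFT := hF true
  funext z y
  cases z <;> cases y <;> simp <;> linarith

lemma blindRate_of_ne {p α₁ α₂ : ℝ} (hp0 : 0 < p) (hp1 : p < 1) (hα : α₂ ≠ α₁) :
    blindRate p α₁ α₂ = binEnt (p * α₁ + (1 - p) * α₂) := by
  refine (congrArg sInf ?_).trans (csInf_singleton _)
  ext r
  simp only [Set.mem_ofPred_eq, Set.mem_singleton_iff, sum_coinPX_mul_coinPZX,
    binEnt_eq_mi2_diagonal]
  constructor
  · rintro ⟨W, hW, hcons, rfl⟩
    rw [eq_diagonal_of_consistent hp0 hp1 hα hW hcons]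
  · rintro rfl
    exact ⟨_, isChannel_diagonal, fun x y => by simp, rfl⟩

lemma blindRate_self {p α : ℝ} (h0 : 0 ≤ α) (h1 : α ≤ 1) : blindRate p α α = 0 := by
  have hmix : p * α + (1 - p) * α = α := by ring
  refine IsLeast.csInf_eq ⟨⟨fun _ => coinPX α, ?_, ?_, ?_⟩, ?_⟩
  · exact fun _ => ⟨coinPX_nonneg h0 h1, sum_coinPX α⟩
  · intro x y
    rw [← Finset.sum_mul, ← Finset.mul_sum, coinPZX_self, sum_coinPX, mul_one]
  · simp only [sum_coinPX_mul_coinPZX, hmix]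
    exact (mi2_mul_eq_zero (sum_coinPX α) (sum_coinPX α)).symm
  · rintro r ⟨W, hW, -, rfl⟩
    simp only [sum_coinPX_mul_coinPZX, hmix]
    exact mi2_mul_channel_nonneg (coinPX_nonneg h0 h1) (sum_coinPX α) hW

lemma tendsto_blindRate_nhdsNE {p α₁ : ℝ} (hp0 : 0 < p) (hp1 : p < 1) :
    Tendsto (fun α₂ => blindRate p α₁ α₂) (𝓝[≠] α₁) (𝓝 (binEnt α₁)) := by
  have hmix : Tendsto (fun α₂ => p * α₁ + (1 - p) * α₂) (𝓝[≠] α₁) (𝓝 α₁) := by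
    have h : Continuous fun α₂ => p * α₁ + (1 - p) * α₂ := by fun_prop
    convert (h.tendsto α₁).mono_left nhdsWithin_le_nhds using 2
    ring
  refine ((binEnt_continuous.tendsto α₁).comp hmix).congr' ?_
  filter_upwards [self_mem_nhdsWithin] with α₂ hα₂
  exact (blindRate_of_ne hp0 hp1 hα₂).symm

/-- Discontinuity of the blind zero-distortion rate: for `α₂ ≠ α₁` the rate is
`h(pα₁ + (1−p)α₂)`, while for `α₂ = α₁` it is `0`; hence `R(0)` is discontinuous
as a function of `α₂` at `α₂ = α₁`. -/
theorem blind_rate_discontinuous (p α₁ : ℝ)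
    (hp : 0 < p ∧ p < 1) (h1 : 0 < α₁ ∧ α₁ < 1) :
    (∀ α₂, 0 < α₂ → α₂ < 1 → α₂ ≠ α₁ →
        blindRate p α₁ α₂ = binEnt (p * α₁ + (1 - p) * α₂)) ∧
      blindRate p α₁ α₁ = 0 ∧
      ¬ ContinuousAt (fun α₂ => blindRate p α₁ α₂) α₁ := by
  have hself : blindRate p α₁ α₁ = 0 := blindRate_self h1.1.le h1.2.le
  refine ⟨fun α₂ _ _ hα => blindRate_of_ne hp.1 hp.2 hα, hself, fun hcont => ?_⟩
  have hlim : Tendsto (fun α₂ => blindRate p α₁ α₂) (𝓝[≠] α₁) (𝓝 0) :=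
    hself ▸ hcont.tendsto.mono_left nhdsWithin_le_nhds
  exact (binEnt_pos h1.1 h1.2).ne' (tendsto_nhds_unique (tendsto_blindRate_nhdsNE hp.1 hp.2) hlim)
end
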